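/- If M satisfies the base axioms, then for every x ∈ M with x > 0 there exists a ∈ {1,…,k−1} such that (x)_{V(x)} = a. -/

import Mathlib

/-- The base axioms for a Büchi-arithmetic-like structure `M` with distinguished
element `one` and function `V`, over the base `k`. -/
structure BuchiAxioms (k : ℕ) (M : Type*) [AddCancelCommMonoid M] [LinearOrder M]
    (one : M) (V : M → M) : Prop where
  transl : ∀ x y z : M, x ≤ y ↔ x + z ≤ y + z
  one_pos : (0 : M) < one
  discrete : ∀ x y : M, x < y → x + one ≤ y
  ord0 : ∀ x : M, 0 ≤ x
  ord1 : ∀ x y : M, x ≤ y ↔ ∃ z ≤ y, z + x = y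
  mod : ∀ x : M, ∃ a : ℕ, a < k ∧ ∃ z : M, x = a • one + k • z ∨ a • one = x + k • z
  v0 : V 0 = 0 ∧ V one = one
  v1 : (∀ x : M, V (k • x) = k • V x) ∧
    ∀ (d : M) (a : ℕ), (0 < d ∧ V d = d) → 1 ≤ a → a < k → V (a • d) = d
  v2 : ∀ x y : M, 0 < x → 0 < y → V x < V y → V (x + y) = V x
  v3 : ∀ x : M, 0 < x → ∃ y ≤ x, ∃ a : ℕ, 1 ≤ a ∧ a < k ∧
    x = y + a • V x ∧ (V x < V y ∨ y = 0)
  v4 : ∀ x : M, 0 < x → ∃ d : M, (0 < d ∧ V d = d) ∧ d ≤ x ∧ x < k • d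
  v5 : ∀ x : M, V (V x) = V x

/-- `(x)_d = a` : the digit of `x` at position `d` (a power of `k`) equals `a`. -/
def DigitEq {M : Type*} [AddCancelCommMonoid M] [LinearOrder M]
    (V : M → M) (x d : M) (a : ℕ) : Prop :=
  (0 < d ∧ V d = d) ∧ ∃ y < d, ∃ z ≤ x, x = y + a • d + z ∧ (z = 0 ∨ d < V z)

/-! Axiom (V3) writes `x = y + a • V x` with `y = 0` or `V x < V y`: this is the digit
decomposition of `x` at position `V x`, with empty lower part. -/

theorem digitEq_of_eq_add_nsmul {M : Type*} [AddCancelCommMonoid M] [LinearOrder M]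
    {V : M → M} {x d z : M} {a : ℕ} (hd : 0 < d) (hVd : V d = d) (hzx : z ≤ x)
    (hx : x = z + a • d) (hz : z = 0 ∨ d < V z) : DigitEq V x d a :=
  ⟨⟨hd, hVd⟩, 0, hd, z, hzx, by rw [zero_add, add_comm, hx], hz⟩

namespace BuchiAxioms

variable {k : ℕ} {M : Type*} [AddCancelCommMonoid M] [LinearOrder M] {one : M} {V : M → M}

theorem V_pos (H : BuchiAxioms k M one V) {x : M} (hx : 0 < x) : 0 < V x := by
  obtain ⟨y, -, a, -, -, hxy, hy⟩ := H.v3 x hx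
  refine (H.ord0 (V x)).lt_of_ne' fun hV => ?_
  rw [hV, smul_zero, add_zero] at hxy
  subst hxy
  rcases hy with h | rfl
  · exact h.false
  · exact hx.false

end BuchiAxioms

theorem stmt4 (k : ℕ) (M : Type*) [AddCancelCommMonoid M] [LinearOrder M]
    (one : M) (V : M → M) (H : BuchiAxioms k M one V) :
    ∀ x : M, 0 < x → ∃ a : ℕ, 1 ≤ a ∧ a < k ∧ DigitEq V x (V x) a := by
  intro x hx
  obtain ⟨y, hyx, a, ha1, hak, hxy, hy⟩ := H.v3 x hx
  exact ⟨a, ha1, hak, digitEq_of_eq_add_nsmul (H.V_pos hx) (H.v5 x) hyx hxy hy.symm⟩
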